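/- Let G be a K₂-hypohamiltonian finite simple graph containing a diamond with vertices a, b, c, d and central edge ac. Then a and c each have degree at least 5 in G. -/

import Mathlib

/- Definitions following "Generation and New Infinite Families of K₂-hypohamiltonian Graphs"
by Goedgebeur, Renders and Zamfirescu. -/

open scoped Classical

noncomputable section

namespace K2HypoPaper

variable {V : Type}

/-- A graph is *hamiltonian* if it contains a cycle passing through every vertex exactly once. -/
def IsHamiltonianGraph (G : SimpleGraph V) : Prop :=
  ∃ (a : V) (p : G.Walk a a), p.IsHamiltonianCycle

/-- A graph is *K₂-hamiltonian* if deleting the two endpoints of any edge yields a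
hamiltonian graph. -/
def IsK2Hamiltonian (G : SimpleGraph V) : Prop :=
  ∀ u v : V, G.Adj u v → IsHamiltonianGraph (G.induce {x : V | x ≠ u ∧ x ≠ v})

/-- A graph is *hypohamiltonian* if it is non-hamiltonian and every vertex-deleted
subgraph is hamiltonian. -/
def IsHypohamiltonian (G : SimpleGraph V) : Prop :=
  ¬ IsHamiltonianGraph G ∧ ∀ v : V, IsHamiltonianGraph (G.induce {x : V | x ≠ v})

/-- A graph is *K₂-hypohamiltonian* if it is non-hamiltonian and K₂-hamiltonian. -/
def IsK2Hypohamiltonian (G : SimpleGraph V) : Prop :=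
  ¬ IsHamiltonianGraph G ∧ IsK2Hamiltonian G

/-! The vertex `a` lies on a hamiltonian cycle of `G - b - c`, where it has two distinct
neighbours `x ≠ y`, both different from `b` and `c`. Neither is `d`: otherwise replacing the
cycle edge `ad` by the path `a b c d` would give a hamiltonian cycle of `G`. Hence `b, c, d, x, y`
are five distinct neighbours of `a`; for `c` exchange the roles of `a` and `c`. -/

end K2HypoPaper

namespace SimpleGraph.Walk

variable {α : Type*} {G : SimpleGraph α} {u v : α}

lemma IsHamiltonian.isHamiltonianCycle_cons [DecidableEq α] {p : G.Walk v u}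
    (hp : p.IsHamiltonian) (h : G.Adj u v) (hlen : 2 ≤ p.length) :
    (cons h p).IsHamiltonianCycle where
  toIsCycle := isCycle_iff_isPath_tail_and_le_length.2
    ⟨by simpa using hp.isPath, by rw [length_cons]; omega⟩
  isHamiltonian_tail := by simpa [IsHamiltonian] using hp

lemma IsHamiltonianCycle.reverse [DecidableEq α] {p : G.Walk u u} (hp : p.IsHamiltonianCycle) :
    p.reverse.IsHamiltonianCycle := by
  have := hp.finite
  cases nonempty_fintype α
  rw [isHamiltonianCycle_iff_isCycle_and_length_eq] at hp ⊢
  exact ⟨hp.1.reverse, by rw [length_reverse, hp.2]⟩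

lemma IsHamiltonianCycle.exists_two_neighbors_isHamiltonian [DecidableEq α] {p : G.Walk v v}
    (hp : p.IsHamiltonianCycle) (u : α) :
    ∃ x y, x ≠ y ∧ G.Adj u x ∧ G.Adj u y ∧
      (∃ q : G.Walk x u, q.IsHamiltonian) ∧ ∃ q : G.Walk y u, q.IsHamiltonian := by
  set C := p.rotate u (hp.mem_support u)
  have hC : C.IsHamiltonianCycle := hp.rotate _
  refine ⟨C.snd, C.penultimate, hC.snd_ne_penultimate, C.adj_snd hC.not_nil,
    (C.adj_penultimate hC.not_nil).symm, ⟨C.tail, hC.isHamiltonian_tail⟩, ?_⟩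
  exact C.snd_reverse ▸ ⟨C.reverse.tail, hC.reverse.isHamiltonian_tail⟩

lemma isHamiltonian_cons_cons [DecidableEq α] {b c x y : α} (hbc : G.Adj b c) (hcx : G.Adj c x)
    {p : G.Walk x y} (hp : p.IsPath) (hsupp : ∀ v, v ∈ p.support ↔ v ≠ b ∧ v ≠ c) :
    (cons hbc (cons hcx p)).IsHamiltonian := by
  refine (IsPath.isHamiltonian_iff ?_).2 fun v => ?_
  · rw [cons_isPath_iff, cons_isPath_iff, support_cons, List.mem_cons, hsupp, hsupp]
    exact ⟨⟨hp, fun h => h.2 rfl⟩, by simp [hbc.ne]⟩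
  · rw [support_cons, support_cons, List.mem_cons, List.mem_cons, hsupp]
    tauto

lemma IsHamiltonian.mem_support_map_induce {s : Set α} [DecidableEq s] {x y : s}
    {q : (G.induce s).Walk x y} (hq : q.IsHamiltonian) (v : α) :
    v ∈ (q.map (Embedding.induce s).toHom).support ↔ v ∈ s := by
  rw [support_map, List.mem_map]
  exact ⟨fun ⟨w, _, hw⟩ => hw ▸ w.2, fun hv => ⟨⟨v, hv⟩, hq.mem_support _, rfl⟩⟩

end SimpleGraph.Walk

namespace K2HypoPaper

open SimpleGraph

variable {V : Type} {G : SimpleGraph V}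

lemma isHamiltonianGraph_of_isHamiltonian_induce {b c : V} {x y : {v | v ≠ b ∧ v ≠ c}}
    {q : (G.induce {v | v ≠ b ∧ v ≠ c}).Walk x y} (hq : q.IsHamiltonian)
    (hyb : G.Adj y b) (hbc : G.Adj b c) (hcx : G.Adj c x) : IsHamiltonianGraph G := by
  have hham := Walk.isHamiltonian_cons_cons hbc hcx (hq.isPath.map Subtype.val_injective)
    hq.mem_support_map_induce
  exact ⟨y, _, hham.isHamiltonianCycle_cons hyb (Nat.le_add_left 2 _)⟩

lemma five_le_ncard_neighborSet_of_diamond [Fintype V] {a b c d : V}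
    (hnot : ¬ IsHamiltonianGraph G) (hH : IsHamiltonianGraph (G.induce {v | v ≠ b ∧ v ≠ c}))
    (hbd : b ≠ d)
    (hab : G.Adj a b) (hac : G.Adj a c) (had : G.Adj a d) (hbc : G.Adj b c) (hcd : G.Adj c d) :
    5 ≤ (G.neighborSet a).ncard := by
  obtain ⟨_, p, hp⟩ := hH
  -- `IsHamiltonianGraph` was elaborated with `Classical.propDecidable` on the subtype
  replace hp : p.IsHamiltonianCycle := by convert hp
  obtain ⟨x, y, hxy, hax, hay, ⟨qx, hqx⟩, ⟨qy, hqy⟩⟩ :=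
    hp.exists_two_neighbors_isHamiltonian ⟨a, hab.ne, hac.ne⟩
  have hxd : (x : V) ≠ d := fun h =>
    hnot (isHamiltonianGraph_of_isHamiltonian_induce hqx hab hbc (h ▸ hcd))
  have hyd : (y : V) ≠ d := fun h =>
    hnot (isHamiltonianGraph_of_isHamiltonian_induce hqy hab hbc (h ▸ hcd))
  have hxy' : (x : V) ≠ y := Subtype.coe_injective.ne hxy
  have hsub : ({b, c, d, ↑x, ↑y} : Set V) ⊆ G.neighborSet a := by
    simp only [Set.insert_subset_iff, Set.singleton_subset_iff, mem_neighborSet]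
    exact ⟨hab, hac, had, hax, hay⟩
  calc 5 = ({b, c, d, ↑x, ↑y} : Set V).ncard := by
        rw [Set.ncard_insert_of_notMem, Set.ncard_insert_of_notMem, Set.ncard_insert_of_notMem,
          Set.ncard_pair hxy']
        all_goals simp [hbc.ne, hbd, hcd.ne, hxd.symm, hyd.symm, x.2.1.symm, x.2.2.symm,
          y.2.1.symm, y.2.2.symm]
    _ ≤ (G.neighborSet a).ncard := Set.ncard_le_ncard hsub

/-- Corollary. Let `G` be a `K₂`-hypohamiltonian graph containing a
diamond with vertices `a, b, c, d` and central edge `ac` (i.e. `ab`, `bc`, `cd`, `da`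
and `ac` are edges of the diamond subgraph while `bd` is not). Then the degrees of `a`
and `c` in `G` are at least `5`. -/
theorem diamond_degree (V : Type) [Fintype V] (G : SimpleGraph V)
    (hG : IsK2Hypohamiltonian G) (a b c d : V)
    (hdist : a ≠ b ∧ a ≠ c ∧ a ≠ d ∧ b ≠ c ∧ b ≠ d ∧ c ≠ d)
    (hab : G.Adj a b) (hbc : G.Adj b c) (hcd : G.Adj c d) (hda : G.Adj d a)
    (hac : G.Adj a c) :
    5 ≤ (G.neighborSet a).ncard ∧ 5 ≤ (G.neighborSet c).ncard := by
  obtain ⟨hnot, hK2⟩ := hG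
  have hbd : b ≠ d := hdist.2.2.2.2.1
  exact ⟨five_le_ncard_neighborSet_of_diamond hnot (hK2 b c hbc) hbd hab hac hda.symm hbc hcd,
    five_le_ncard_neighborSet_of_diamond hnot (hK2 b a hab.symm) hbd hbc.symm hac.symm hcd
      hab.symm hda.symm⟩

end K2HypoPaper
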